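/- Fix parameters (c_σ, b_σ), (c_μ, b_μ), (c_ν, b_ν) with c_σ, c_μ, c_ν > 0 and b_σ, b_μ, b_ν ∈ ℝ∖{0}, and let Φ⁺ be the associated one-dimensional phase. Then for every K ≥ 1 there exist δ > 0 and c > 0 (depending on K and the parameters) such that: whenever (α, β) ∈ ℝ² satisfies |α|, |β|, |α−β| ≤ K, max(|α|, |β|, |α−β|) ≥ K^{−1}, and min(|α|, |β|, |α−β|) ≤ δ, one has max_{0 ≤ j ≤ 2} |∂_β^j Φ⁺(α,β)| ≥ c. (That is, when at least one of the three frequencies is small while the point stays away from the origin, the non-degeneracy of Φ⁺ already holds with derivatives up to order 2 instead of order 3.) -/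

import Mathlib

noncomputable section

/-- `Λ_τ(x) = sgn(b_τ)·√(c_τ² x² + b_τ²)` on the real line. -/
def Lam1 (c b x : ℝ) : ℝ := Real.sign b * Real.sqrt (c ^ 2 * x ^ 2 + b ^ 2)

/-- The one-dimensional phase `Φ⁺(α,β) = Λ_σ(α) − Λ_μ(α−β) − Λ_ν(β)`. -/
def PhiP (cσ bσ cμ bμ cν bν α β : ℝ) : ℝ :=
  Lam1 cσ bσ α - Lam1 cμ bμ (α - β) - Lam1 cν bν β

/-!
By compactness of the annulus `K⁻¹ ≤ max(|α|, |β|, |α - β|) ≤ K` and continuity of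
`max_{j ≤ 2} |∂_β^j Φ⁺|`, it suffices to show that this quantity is positive where one of
`α, β, α - β` vanishes. For `β = 0` or `α = β` already `∂_β Φ⁺ = ±Λ'(x)` with `x ≠ 0`.
For `α = 0` the phase is `b_σ - Λ_μ(β) - Λ_ν(β)` by evenness of `Λ`, and the vanishing of its
first two derivatives forces `Λ_μ(β) = -Λ_ν(β)`, leaving `Φ⁺ = b_σ ≠ 0`.
-/

-- `max f g` is positive on `S`, hence bounded below there by some `c > 0`.
lemma IsCompact.exists_pos_le_of_lt {X : Type*} [TopologicalSpace X] {S : Set X}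
    (hS : IsCompact S) {f g : X → ℝ} (hf : ContinuousOn f S) (hg : ContinuousOn g S)
    (hpos : ∀ p ∈ S, g p ≤ 0 → 0 < f p) : ∃ c > 0, ∀ p ∈ S, g p < c → c ≤ f p := by
  obtain ⟨c, hc, hcS⟩ := hS.exists_forall_le' (f := fun p => max (f p) (g p)) (hf.sup hg)
      (a := 0) fun p hp => by
    by_cases hgp : g p ≤ 0
    · exact lt_max_of_lt_left (hpos p hp hgp)
    · exact lt_max_of_lt_right (not_le.1 hgp)
  refine ⟨c, hc, fun p hp hgp => ?_⟩
  rcases le_max_iff.1 (hcS p hp) with h | h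
  · exact h
  · exact absurd h (not_le.2 hgp)

section Dispersion

variable {c b : ℝ}

lemma Real.sign_sq_of_ne_zero (hb : b ≠ 0) : Real.sign b ^ 2 = 1 := by
  rcases Real.sign_apply_eq_of_ne_zero b hb with h | h <;> simp [h]

lemma Lam1_sq (hb : b ≠ 0) (x : ℝ) : Lam1 c b x ^ 2 = c ^ 2 * x ^ 2 + b ^ 2 := by
  rw [Lam1, mul_pow, Real.sign_sq_of_ne_zero hb, one_mul, Real.sq_sqrt (by positivity)]

lemma Lam1_ne_zero (hb : b ≠ 0) (x : ℝ) : Lam1 c b x ≠ 0 := by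
  rw [← pow_ne_zero_iff two_ne_zero, Lam1_sq hb]
  positivity

lemma Lam1_neg (x : ℝ) : Lam1 c b (-x) = Lam1 c b x := by
  simp [Lam1]

lemma Lam1_zero : Lam1 c b 0 = b := by
  rcases lt_trichotomy b 0 with h | rfl | h
  · simp [Lam1, Real.sqrt_sq_eq_abs, Real.sign_of_neg h, abs_of_neg h]
  · simp [Lam1]
  · simp [Lam1, Real.sqrt_sq_eq_abs, Real.sign_of_pos h, abs_of_pos h]

def Lam1Deriv (c b x : ℝ) : ℝ := c ^ 2 * x / Lam1 c b x

def Lam1Deriv2 (c b x : ℝ) : ℝ := c ^ 2 * b ^ 2 / Lam1 c b x ^ 3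

@[fun_prop]
lemma continuous_Lam1 : Continuous (Lam1 c b) := by
  unfold Lam1; fun_prop

@[fun_prop]
lemma continuous_Lam1Deriv (hb : b ≠ 0) : Continuous (Lam1Deriv c b) :=
  (continuous_const.mul continuous_id).div continuous_Lam1 (Lam1_ne_zero hb)

@[fun_prop]
lemma continuous_Lam1Deriv2 (hb : b ≠ 0) : Continuous (Lam1Deriv2 c b) :=
  continuous_const.div (continuous_Lam1.pow 3) fun x => pow_ne_zero 3 (Lam1_ne_zero hb x)

lemma hasDerivAt_Lam1 (hb : b ≠ 0) (x : ℝ) : HasDerivAt (Lam1 c b) (Lam1Deriv c b x) x := by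
  have hq : c ^ 2 * x ^ 2 + b ^ 2 ≠ 0 := by positivity
  have h := (((hasDerivAt_pow 2 x).const_mul (c ^ 2)).add_const (b ^ 2)).sqrt hq |>.const_mul
    (Real.sign b)
  refine h.congr_deriv ?_
  have hs : Real.sqrt (c ^ 2 * x ^ 2 + b ^ 2) ≠ 0 := by positivity
  simp only [Lam1Deriv, Lam1]
  rcases Real.sign_apply_eq_of_ne_zero b hb with h | h <;> rw [h] <;> field_simp <;> ring

lemma hasDerivAt_Lam1Deriv (hb : b ≠ 0) (x : ℝ) :
    HasDerivAt (Lam1Deriv c b) (Lam1Deriv2 c b x) x := by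
  have hL := Lam1_ne_zero (c := c) hb x
  have h := ((hasDerivAt_id x).const_mul (c ^ 2)).div (hasDerivAt_Lam1 hb x) hL
  refine h.congr_deriv ?_
  simp only [Lam1Deriv2, Lam1Deriv, id]
  field_simp
  linear_combination c ^ 2 * Lam1_sq (c := c) hb x

lemma Lam1Deriv_neg (x : ℝ) : Lam1Deriv c b (-x) = -Lam1Deriv c b x := by
  rw [Lam1Deriv, Lam1Deriv, Lam1_neg, mul_neg, neg_div]

lemma Lam1Deriv2_neg (x : ℝ) : Lam1Deriv2 c b (-x) = Lam1Deriv2 c b x := by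
  rw [Lam1Deriv2, Lam1Deriv2, Lam1_neg]

lemma Lam1Deriv_ne_zero (hc : 0 < c) (hb : b ≠ 0) {x : ℝ} (hx : x ≠ 0) : Lam1Deriv c b x ≠ 0 :=
  div_ne_zero (by positivity) (Lam1_ne_zero hb x)

variable {c' b' : ℝ}

/-- Via `Λ'' = c² b² / Λ³` and `b² = Λ² - c² x²`, the two cancellations force `c² = c'²`;
then `Λ' = c² x / Λ` turns the first one into `Λ + Λ' = 0`. -/
lemma Lam1_add_eq_zero_of_derivs_add_eq_zero (hc : 0 < c) (hc' : 0 < c') (hb : b ≠ 0)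
    (hb' : b' ≠ 0) {x : ℝ} (hx : x ≠ 0) (h1 : Lam1Deriv c b x + Lam1Deriv c' b' x = 0)
    (h2 : Lam1Deriv2 c b x + Lam1Deriv2 c' b' x = 0) : Lam1 c b x + Lam1 c' b' x = 0 := by
  have hL := Lam1_sq (c := c) hb x
  have hM := Lam1_sq (c := c') hb' x
  have hL0 := Lam1_ne_zero (c := c) hb x
  have hM0 := Lam1_ne_zero (c := c') hb' x
  rw [Lam1Deriv, Lam1Deriv] at h1
  rw [Lam1Deriv2, Lam1Deriv2] at h2
  set L := Lam1 c b x
  set M := Lam1 c' b' x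
  field_simp at h1 h2
  have E1 : c ^ 2 * M + c' ^ 2 * L = 0 :=
    mul_left_cancel₀ hx (by linear_combination h1)
  have hbb : c' ^ 4 * b ^ 2 = c ^ 4 * b' ^ 2 := by
    refine mul_left_cancel₀ (by positivity : c' ^ 2 * L ^ 3 ≠ 0) ?_
    linear_combination b ^ 2 * (c ^ 4 * M ^ 2 - c ^ 2 * c' ^ 2 * M * L + c' ^ 4 * L ^ 2) * E1 -
      c ^ 4 * h2
  have hcc : c ^ 2 = c' ^ 2 := by
    have h : (c ^ 2 * c' ^ 2 * x ^ 2) * (c ^ 2 - c' ^ 2) = 0 := by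
      linear_combination hbb + c' ^ 4 * hL - c ^ 4 * hM + (c ^ 2 * M - c' ^ 2 * L) * E1
    have := (mul_eq_zero.1 h).resolve_left (by positivity)
    linarith
  exact mul_left_cancel₀ (by positivity : c ^ 2 ≠ 0) (by linear_combination E1 + L * hcc)

end Dispersion

section Phase

variable {cσ bσ cμ bμ cν bν : ℝ}

/-- `max_{j ≤ 2} |∂_β^j Φ⁺(α, β)|`, through the closed forms of the derivatives. -/
def PhiPJetNorm (cσ bσ cμ bμ cν bν α β : ℝ) : ℝ :=
  max |PhiP cσ bσ cμ bμ cν bν α β|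
    (max |Lam1Deriv cμ bμ (α - β) - Lam1Deriv cν bν β|
      |-Lam1Deriv2 cμ bμ (α - β) - Lam1Deriv2 cν bν β|)

lemma continuous_PhiPJetNorm (hbμ : bμ ≠ 0) (hbν : bν ≠ 0) :
    Continuous fun p : ℝ × ℝ => PhiPJetNorm cσ bσ cμ bμ cν bν p.1 p.2 := by
  unfold PhiPJetNorm PhiP
  fun_prop (disch := assumption)

lemma hasDerivAt_PhiP (hbμ : bμ ≠ 0) (hbν : bν ≠ 0) (α y : ℝ) :
    HasDerivAt (fun z => PhiP cσ bσ cμ bμ cν bν α z)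
      (Lam1Deriv cμ bμ (α - y) - Lam1Deriv cν bν y) y := by
  have hμ := (hasDerivAt_Lam1 (c := cμ) hbμ (α - y)).comp y ((hasDerivAt_id y).const_sub α)
  have h := (hμ.const_sub (Lam1 cσ bσ α)).sub (hasDerivAt_Lam1 (c := cν) hbν y)
  exact h.congr_deriv (by ring)

lemma hasDerivAt_PhiP_deriv (hbμ : bμ ≠ 0) (hbν : bν ≠ 0) (α y : ℝ) :
    HasDerivAt (fun z => Lam1Deriv cμ bμ (α - z) - Lam1Deriv cν bν z)
      (-Lam1Deriv2 cμ bμ (α - y) - Lam1Deriv2 cν bν y) y := by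
  have hμ := (hasDerivAt_Lam1Deriv (c := cμ) hbμ (α - y)).comp y ((hasDerivAt_id y).const_sub α)
  have h := hμ.sub (hasDerivAt_Lam1Deriv (c := cν) hbν y)
  exact h.congr_deriv (by ring)

lemma exists_le_abs_iteratedDeriv_PhiP (hbμ : bμ ≠ 0) (hbν : bν ≠ 0) {C α β : ℝ}
    (h : C ≤ PhiPJetNorm cσ bσ cμ bμ cν bν α β) :
    ∃ j ≤ 2, C ≤ |iteratedDeriv j (fun y => PhiP cσ bσ cμ bμ cν bν α y) β| := by
  have hderiv : deriv (fun y => PhiP cσ bσ cμ bμ cν bν α y)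
      = fun y => Lam1Deriv cμ bμ (α - y) - Lam1Deriv cν bν y :=
    funext fun y => (hasDerivAt_PhiP hbμ hbν α y).deriv
  rcases le_max_iff.1 h with h0 | h12
  · exact ⟨0, by norm_num, by rwa [iteratedDeriv_zero]⟩
  rcases le_max_iff.1 h12 with h1 | h2
  · exact ⟨1, by norm_num, by rwa [iteratedDeriv_one, hderiv]⟩
  · refine ⟨2, le_rfl, ?_⟩
    rwa [iteratedDeriv_succ, iteratedDeriv_one, hderiv,
      (hasDerivAt_PhiP_deriv hbμ hbν α β).deriv]

lemma PhiPJetNorm_pos_of_fst_eq_zero (hcμ : 0 < cμ) (hcν : 0 < cν) (hbσ : bσ ≠ 0)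
    (hbμ : bμ ≠ 0) (hbν : bν ≠ 0) {β : ℝ} (hβ : β ≠ 0) :
    0 < PhiPJetNorm cσ bσ cμ bμ cν bν 0 β := by
  by_contra! h
  simp only [PhiPJetNorm, PhiP, zero_sub, Lam1_zero, Lam1_neg, Lam1Deriv_neg, Lam1Deriv2_neg,
    max_le_iff, abs_nonpos_iff] at h
  obtain ⟨h0, h1, h2⟩ := h
  have hsum := Lam1_add_eq_zero_of_derivs_add_eq_zero hcμ hcν hbμ hbν hβ (by linarith) (by linarith)
  exact hbσ (by linarith)

lemma PhiPJetNorm_pos_of_snd_eq_zero (hcμ : 0 < cμ) (hbμ : bμ ≠ 0) {α : ℝ} (hα : α ≠ 0) :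
    0 < PhiPJetNorm cσ bσ cμ bμ cν bν α 0 := by
  refine lt_max_of_lt_right (lt_max_of_lt_left (abs_pos.2 ?_))
  simpa [Lam1Deriv] using Lam1Deriv_ne_zero hcμ hbμ hα

lemma PhiPJetNorm_pos_of_fst_eq_snd (hcν : 0 < cν) (hbν : bν ≠ 0) {β : ℝ} (hβ : β ≠ 0) :
    0 < PhiPJetNorm cσ bσ cμ bμ cν bν β β := by
  refine lt_max_of_lt_right (lt_max_of_lt_left (abs_pos.2 ?_))
  simpa [Lam1Deriv] using Lam1Deriv_ne_zero hcν hbν hβ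

lemma PhiPJetNorm_pos (hcμ : 0 < cμ) (hcν : 0 < cν) (hbσ : bσ ≠ 0) (hbμ : bμ ≠ 0)
    (hbν : bν ≠ 0) {α β : ℝ} (hmax : 0 < max |α| (max |β| |α - β|))
    (hmin : min |α| (min |β| |α - β|) ≤ 0) :
    0 < PhiPJetNorm cσ bσ cμ bμ cν bν α β := by
  simp only [min_le_iff, abs_nonpos_iff, sub_eq_zero] at hmin
  rcases hmin with rfl | rfl | rfl
  · exact PhiPJetNorm_pos_of_fst_eq_zero hcμ hcν hbσ hbμ hbν (by rintro rfl; simp at hmax)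
  · exact PhiPJetNorm_pos_of_snd_eq_zero hcμ hbμ (by rintro rfl; simp at hmax)
  · exact PhiPJetNorm_pos_of_fst_eq_snd hcν hbν (by rintro rfl; simp at hmax)

end Phase

theorem statement6_general (cσ bσ cμ bμ cν bν : ℝ)
    (hcμ : 0 < cμ) (hcν : 0 < cν)
    (hbσ : bσ ≠ 0) (hbμ : bμ ≠ 0) (hbν : bν ≠ 0) :
    ∀ K : ℝ, 1 ≤ K → ∃ δ : ℝ, 0 < δ ∧ ∃ c : ℝ, 0 < c ∧
      ∀ α β : ℝ,
        |α| ≤ K → |β| ≤ K → |α - β| ≤ K →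
        K⁻¹ ≤ max |α| (max |β| |α - β|) →
        min |α| (min |β| |α - β|) ≤ δ →
        ∃ j ≤ 2, c ≤ |iteratedDeriv j (fun y => PhiP cσ bσ cμ bμ cν bν α y) β| := by
  intro K hK
  set M : ℝ × ℝ → ℝ := fun p => max |p.1| (max |p.2| |p.1 - p.2|)
  set m : ℝ × ℝ → ℝ := fun p => min |p.1| (min |p.2| |p.1 - p.2|)
  have hS : IsCompact (M ⁻¹' Set.Icc K⁻¹ K) :=
    (isCompact_Icc.prod isCompact_Icc).of_isClosed_subset
      (isClosed_Icc.preimage (by fun_prop)) fun p hp =>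
        ⟨abs_le.1 ((le_max_left _ _).trans hp.2),
          abs_le.1 ((le_max_left _ _).trans ((le_max_right _ _).trans hp.2))⟩
  obtain ⟨c, hc, hcS⟩ := hS.exists_pos_le_of_lt
    (continuous_PhiPJetNorm hbμ hbν).continuousOn (by fun_prop : Continuous m).continuousOn
    fun p hp => PhiPJetNorm_pos hcμ hcν hbσ hbμ hbν ((inv_pos.2 (by linarith)).trans_le hp.1)
  refine ⟨c / 2, half_pos hc, c, hc, fun α β hα hβ hαβ hmax hmin => ?_⟩
  exact exists_le_abs_iteratedDeriv_PhiP hbμ hbν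
    (hcS (α, β) ⟨hmax, max_le hα (max_le hβ hαβ)⟩ (by linarith))

/-- Improved non-degeneracy of `Φ⁺` when one of the three frequencies is small
while the point stays away from the origin: some `β`-derivative of order at
most `2` is bounded below. -/
theorem statement6 (cσ bσ cμ bμ cν bν : ℝ)
    (hcσ : 0 < cσ) (hcμ : 0 < cμ) (hcν : 0 < cν)
    (hbσ : bσ ≠ 0) (hbμ : bμ ≠ 0) (hbν : bν ≠ 0) :
    ∀ K : ℝ, 1 ≤ K → ∃ δ : ℝ, 0 < δ ∧ ∃ c : ℝ, 0 < c ∧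
      ∀ α β : ℝ,
        |α| ≤ K → |β| ≤ K → |α - β| ≤ K →
        K⁻¹ ≤ max |α| (max |β| |α - β|) →
        min |α| (min |β| |α - β|) ≤ δ →
        ∃ j ≤ 2, c ≤ |iteratedDeriv j (fun y => PhiP cσ bσ cμ bμ cν bν α y) β| :=
  statement6_general cσ bσ cμ bμ cν bν hcμ hcν hbσ hbμ hbν
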